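/- Let k be a field, (V, R) a braided vector space (R : V ⊗ V → V ⊗ V invertible satisfying the braid equation), and let Ψ : T(V) ⊗ T(V) → T(V) ⊗ T(V) be an invertible linear map satisfying: Ψ ∘ (ι ⊗ ι) = (ι ⊗ ι) ∘ R; the braid equation on T(V)^{⊗3}; the compatibility conditions Ψ ∘ (m ⊗ id) = (id ⊗ m)(Ψ ⊗ id)(id ⊗ Ψ) and Ψ ∘ (id ⊗ m) = (m ⊗ id)(id ⊗ Ψ)(Ψ ⊗ id); and Ψ(x ⊗ 1) = 1 ⊗ x, Ψ(1 ⊗ x) = x ⊗ 1. Let C be a k-coalgebra and σ : C → End_k(T(V)) a measuring map such that σ(c)(ι(V)) ⊆ ι(V) for all c ∈ C and such that for all c ∈ C the map (σ ⊗ σ)(Δc) := Σ_{(c)} σ(c₍₁₎) ⊗ σ(c₍₂₎) commutes with R on ι(V) ⊗ ι(V), i.e., Ψ((σ ⊗ σ)(Δc)(x ⊗ y)) = (σ ⊗ σ)(Δc)(Ψ(x ⊗ y)) for all x, y ∈ ι(V). Then Ψ((σ ⊗ σ)(Δc)(x ⊗ y)) = (σ ⊗ σ)(Δc)(Ψ(x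 ⊗ y)) for all c ∈ C and all x, y ∈ T(V). -/

import Mathlib

open TensorProduct

universe u

variable {k : Type u} [Field k]

/-- The convolution product on `C →ₗ[k] B` for a coalgebra `C` and algebra `B`:
`(f * g)(c) = Σ f(c₍₁₎) g(c₍₂₎)`. -/
noncomputable def conv {C B : Type u} [AddCommGroup C] [Module k C] [Coalgebra k C]
    [Ring B] [Algebra k B] (f g : C →ₗ[k] B) : C →ₗ[k] B :=
  (TensorProduct.lift ((LinearMap.mul k B).compl₁₂ f g)) ∘ₗ Coalgebra.comul

/-- `σ : C →ₗ[k] Hom(A,B)` is a measuring map if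
`σ(c)(a a') = Σ σ(c₍₁₎)(a) σ(c₍₂₎)(a')` and `σ(c)(1) = ε(c) 1`. -/
noncomputable def IsMeasuring {C A B : Type u} [AddCommGroup C] [Module k C] [Coalgebra k C]
    [Ring A] [Algebra k A] [Ring B] [Algebra k B]
    (σ : C →ₗ[k] A →ₗ[k] B) : Prop :=
  (∀ (c : C) (a a' : A), σ c (a * a') = conv (σ.flip a) (σ.flip a') c) ∧
  (∀ c : C, σ c (1 : A) = (Coalgebra.counit (R := k) c) • (1 : B))

/-- `(P, π)` is a universal measuring coalgebra for the pair `(A, B)`. -/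
noncomputable def IsUniversalMeasuring {A B : Type u} [Ring A] [Algebra k A]
    [Ring B] [Algebra k B]
    (P : Type u) [AddCommGroup P] [Module k P] [Coalgebra k P]
    (π : P →ₗ[k] A →ₗ[k] B) : Prop :=
  IsMeasuring π ∧
  ∀ (C : Type u) [AddCommGroup C] [Module k C] [Coalgebra k C]
    (σ : C →ₗ[k] A →ₗ[k] B), IsMeasuring σ →
      ∃! ρ : C →ₗc[k] P, π ∘ₗ (ρ : C →ₗ[k] P) = σ

variable {k : Type u} [Field k]

/-- `f ⊗ id` as an endomorphism of `M ⊗ (M ⊗ M)`, i.e. `f` acting on the first two factors. -/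
noncomputable def braidLeft {M : Type u} [AddCommGroup M] [Module k M]
    (f : M ⊗[k] M →ₗ[k] M ⊗[k] M) :
    M ⊗[k] (M ⊗[k] M) →ₗ[k] M ⊗[k] (M ⊗[k] M) :=
  (TensorProduct.assoc k M M M).toLinearMap ∘ₗ f.rTensor M ∘ₗ
    (TensorProduct.assoc k M M M).symm.toLinearMap

/-- `id ⊗ f` as an endomorphism of `M ⊗ (M ⊗ M)`, i.e. `f` acting on the last two factors. -/
noncomputable def braidRight {M : Type u} [AddCommGroup M] [Module k M]
    (f : M ⊗[k] M →ₗ[k] M ⊗[k] M) :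
    M ⊗[k] (M ⊗[k] M) →ₗ[k] M ⊗[k] (M ⊗[k] M) :=
  f.lTensor M

/-- The braid equation `(id ⊗ f)(f ⊗ id)(id ⊗ f) = (f ⊗ id)(id ⊗ f)(f ⊗ id)` on `M ⊗ M ⊗ M`. -/
noncomputable def SatisfiesBraidEquation {M : Type u} [AddCommGroup M] [Module k M]
    (f : M ⊗[k] M →ₗ[k] M ⊗[k] M) : Prop :=
  braidRight f ∘ₗ braidLeft f ∘ₗ braidRight f = braidLeft f ∘ₗ braidRight f ∘ₗ braidLeft f

/-- The operator `(σ ⊗ σ)(Δ c) = Σ σ(c₍₁₎) ⊗ σ(c₍₂₎)` on `T ⊗ T`. -/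
noncomputable def twoAction {C T : Type u} [AddCommGroup C] [Module k C] [Coalgebra k C]
    [AddCommGroup T] [Module k T] (σ : C →ₗ[k] T →ₗ[k] T) (c : C) :
    T ⊗[k] T →ₗ[k] T ⊗[k] T :=
  TensorProduct.homTensorHomMap (RingHom.id k) T T T T
    ((TensorProduct.map σ σ) (Coalgebra.comul (R := k) c))


section AuxMeasuring

open Coalgebra

set_option linter.unusedSectionVars false
set_option synthInstance.maxHeartbeats 1000000
set_option maxHeartbeats 1000000

variable {C B : Type u} [AddCommGroup C] [Module k C] [Coalgebra k C]
  [Ring B] [Algebra k B]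

/-- `Σ σ(c₁) ⊗ σ(c₂)`, as a linear function of `Σ c₁ ⊗ c₂`. -/
noncomputable def Phi2 (σ : C →ₗ[k] B →ₗ[k] B) :
    C ⊗[k] C →ₗ[k] B ⊗[k] B →ₗ[k] B ⊗[k] B :=
  TensorProduct.homTensorHomMap (RingHom.id k) B B B B ∘ₗ TensorProduct.map σ σ

/-- The threefold analogue of `Phi2`, on right-associated triple tensor products. -/
noncomputable def Phi3 (σ : C →ₗ[k] B →ₗ[k] B) :
    C ⊗[k] (C ⊗[k] C) →ₗ[k] B ⊗[k] (B ⊗[k] B) →ₗ[k] B ⊗[k] (B ⊗[k] B) :=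
  TensorProduct.homTensorHomMap (RingHom.id k) B (B ⊗[k] B) B (B ⊗[k] B) ∘ₗ
    TensorProduct.map σ (Phi2 σ)

/-- The threefold analogue of `Phi2`, on left-associated triple tensor products. -/
noncomputable def Phi3' (σ : C →ₗ[k] B →ₗ[k] B) :
    (C ⊗[k] C) ⊗[k] C →ₗ[k] (B ⊗[k] B) ⊗[k] B →ₗ[k] (B ⊗[k] B) ⊗[k] B :=
  TensorProduct.homTensorHomMap (RingHom.id k) (B ⊗[k] B) B (B ⊗[k] B) B ∘ₗ
    TensorProduct.map (Phi2 σ) σ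

variable (σ : C →ₗ[k] B →ₗ[k] B)

@[simp] lemma Phi2_tmul (c₁ c₂ : C) :
    Phi2 σ (c₁ ⊗ₜ[k] c₂) = TensorProduct.map (σ c₁) (σ c₂) := by
  simp [Phi2, TensorProduct.homTensorHomMap_apply]

@[simp] lemma Phi3_tmul (c₁ : C) (u : C ⊗[k] C) :
    Phi3 σ (c₁ ⊗ₜ[k] u) = TensorProduct.map (σ c₁) (Phi2 σ u) := by
  simp [Phi3, TensorProduct.homTensorHomMap_apply]

@[simp] lemma Phi3'_tmul (u : C ⊗[k] C) (c₂ : C) :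
    Phi3' σ (u ⊗ₜ[k] c₂) = TensorProduct.map (Phi2 σ u) (σ c₂) := by
  simp [Phi3', TensorProduct.homTensorHomMap_apply]

lemma twoAction_eq_Phi2 (c : C) (b : B ⊗[k] B) :
    twoAction σ c b = Phi2 σ (Coalgebra.comul (R := k) c) b := rfl

set_option synthInstance.maxHeartbeats 400000 in
lemma Phi3_assoc (w : (C ⊗[k] C) ⊗[k] C) (b : (B ⊗[k] B) ⊗[k] B) :
    Phi3 σ (TensorProduct.assoc k C C C w) (TensorProduct.assoc k B B B b) =
      TensorProduct.assoc k B B B (Phi3' σ w b) := by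
  induction w using TensorProduct.induction_on with
  | zero => simp only [LinearEquiv.map_zero, map_zero, LinearMap.zero_apply]
  | tmul u c₂ =>
    induction u using TensorProduct.induction_on with
    | zero => simp only [TensorProduct.zero_tmul, LinearEquiv.map_zero, map_zero,
        LinearMap.zero_apply]
    | tmul c₀ c₁ =>
      simp [TensorProduct.assoc_tmul, TensorProduct.map_map_assoc]
    | add u₁ u₂ h₁ h₂ =>
      simp only [TensorProduct.add_tmul, map_add, LinearMap.add_apply, h₁, h₂]
  | add w₁ w₂ h₁ h₂ =>
    simp only [map_add, LinearMap.add_apply, h₁, h₂]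

lemma meas_mul {σ : C →ₗ[k] B →ₗ[k] B} (hσ : IsMeasuring σ) (c : C) (a a' : B) :
    σ c (a * a') = LinearMap.mul' k B (Phi2 σ (comul (R := k) c) (a ⊗ₜ[k] a')) := by
  rw [hσ.1 c a a']
  show TensorProduct.lift ((LinearMap.mul k B).compl₁₂ (σ.flip a) (σ.flip a'))
      (comul (R := k) c) = _
  induction comul (R := k) c using TensorProduct.induction_on with
  | zero => simp
  | tmul c₁ c₂ => simp [LinearMap.mul'_apply, LinearMap.mul_apply']
  | add z₁ z₂ h₁ h₂ => simp only [map_add, LinearMap.add_apply, h₁, h₂]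

lemma Phi2_one_left {σ : C →ₗ[k] B →ₗ[k] B} (hσ : IsMeasuring σ) (c : C) (a : B) :
    Phi2 σ (comul (R := k) c) ((1 : B) ⊗ₜ[k] a) = (1 : B) ⊗ₜ[k] σ c a := by
  have h : ∀ z : C ⊗[k] C, Phi2 σ z ((1 : B) ⊗ₜ[k] a) =
      TensorProduct.map (Algebra.linearMap k B) (σ.flip a)
        ((counit (R := k) (A := C)).rTensor C z) := by
    intro z
    induction z using TensorProduct.induction_on with
    | zero => simp
    | tmul c₁ c₂ =>
      simp [hσ.2 c₁, Algebra.algebraMap_eq_smul_one, ← TensorProduct.smul_tmul']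
    | add z₁ z₂ h₁ h₂ => simp only [map_add, LinearMap.add_apply, h₁, h₂]
  rw [h, Coalgebra.rTensor_counit_comul]
  simp

lemma Phi2_one_right {σ : C →ₗ[k] B →ₗ[k] B} (hσ : IsMeasuring σ) (c : C) (a : B) :
    Phi2 σ (comul (R := k) c) (a ⊗ₜ[k] (1 : B)) = σ c a ⊗ₜ[k] (1 : B) := by
  have h : ∀ z : C ⊗[k] C, Phi2 σ z (a ⊗ₜ[k] (1 : B)) =
      TensorProduct.map (σ.flip a) (Algebra.linearMap k B)
        ((counit (R := k) (A := C)).lTensor C z) := by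
    intro z
    induction z using TensorProduct.induction_on with
    | zero => simp
    | tmul c₁ c₂ =>
      simp [hσ.2 c₂, Algebra.algebraMap_eq_smul_one, TensorProduct.tmul_smul]
    | add z₁ z₂ h₁ h₂ => simp only [map_add, LinearMap.add_apply, h₁, h₂]
  rw [h, Coalgebra.lTensor_counit_comul]
  simp

lemma Phi2_mul_fst {σ : C →ₗ[k] B →ₗ[k] B} (hσ : IsMeasuring σ) (c : C) (x x' y : B) :
    Phi2 σ (comul (R := k) c) ((x * x') ⊗ₜ[k] y) =
      (LinearMap.mul' k B).rTensor B
        (Phi3' σ ((comul (R := k) (A := C)).rTensor C (comul (R := k) c))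
          ((x ⊗ₜ[k] x') ⊗ₜ[k] y)) := by
  induction comul (R := k) c using TensorProduct.induction_on with
  | zero => simp
  | tmul c₁ c₂ => simp [meas_mul hσ]
  | add z₁ z₂ h₁ h₂ => simp only [map_add, LinearMap.add_apply, h₁, h₂]

lemma Phi2_mul_snd {σ : C →ₗ[k] B →ₗ[k] B} (hσ : IsMeasuring σ) (c : C) (x y y' : B) :
    Phi2 σ (comul (R := k) c) (x ⊗ₜ[k] (y * y')) =
      (LinearMap.mul' k B).lTensor B
        (Phi3 σ ((comul (R := k) (A := C)).lTensor C (comul (R := k) c))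
          (x ⊗ₜ[k] (y ⊗ₜ[k] y'))) := by
  induction comul (R := k) c using TensorProduct.induction_on with
  | zero => simp
  | tmul c₁ c₂ => simp [meas_mul hσ]
  | add z₁ z₂ h₁ h₂ => simp only [map_add, LinearMap.add_apply, h₁, h₂]

lemma lTensor_Phi3_comm (Ψ' : B ⊗[k] B →ₗ[k] B ⊗[k] B) (u : B ⊗[k] B)
    (hu : ∀ c' : C, Ψ' (Phi2 σ (comul (R := k) c') u) = Phi2 σ (comul (R := k) c') (Ψ' u))
    (c : C) (x : B) :
    Ψ'.lTensor B (Phi3 σ ((comul (R := k) (A := C)).lTensor C (comul (R := k) c))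
        (x ⊗ₜ[k] u)) =
      Phi3 σ ((comul (R := k) (A := C)).lTensor C (comul (R := k) c)) (x ⊗ₜ[k] Ψ' u) := by
  induction comul (R := k) c using TensorProduct.induction_on with
  | zero => simp
  | tmul c₁ c₂ => simp [hu c₂]
  | add z₁ z₂ h₁ h₂ => simp only [map_add, LinearMap.add_apply, h₁, h₂]

lemma rTensor_Phi3'_comm (Ψ' : B ⊗[k] B →ₗ[k] B ⊗[k] B) (w : B ⊗[k] B)
    (hw : ∀ c' : C, Ψ' (Phi2 σ (comul (R := k) c') w) = Phi2 σ (comul (R := k) c') (Ψ' w))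
    (c : C) (t : B) :
    Ψ'.rTensor B (Phi3' σ ((comul (R := k) (A := C)).rTensor C (comul (R := k) c))
        (w ⊗ₜ[k] t)) =
      Phi3' σ ((comul (R := k) (A := C)).rTensor C (comul (R := k) c)) (Ψ' w ⊗ₜ[k] t) := by
  induction comul (R := k) c using TensorProduct.induction_on with
  | zero => simp
  | tmul c₁ c₂ => simp [hw c₁]
  | add z₁ z₂ h₁ h₂ => simp only [map_add, LinearMap.add_apply, h₁, h₂]

lemma Phi3'_mul_collapse {σ : C →ₗ[k] B →ₗ[k] B} (hσ : IsMeasuring σ) (c : C)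
    (s : B ⊗[k] B) (t : B) :
    (LinearMap.mul' k B).lTensor B (TensorProduct.assoc k B B B
        (Phi3' σ ((comul (R := k) (A := C)).rTensor C (comul (R := k) c)) (s ⊗ₜ[k] t))) =
      Phi2 σ (comul (R := k) c) ((LinearMap.mul' k B).lTensor B
        (TensorProduct.assoc k B B B (s ⊗ₜ[k] t))) := by
  induction s using TensorProduct.induction_on with
  | zero => simp [TensorProduct.zero_tmul]
  | tmul p q =>
    rw [← Phi3_assoc, Coalgebra.coassoc_apply, TensorProduct.assoc_tmul,
      LinearMap.lTensor_tmul, LinearMap.mul'_apply, Phi2_mul_snd hσ]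
  | add s₁ s₂ h₁ h₂ =>
    simp only [TensorProduct.add_tmul, map_add, LinearMap.map_add, h₁, h₂]

lemma Phi3_mul_collapse {σ : C →ₗ[k] B →ₗ[k] B} (hσ : IsMeasuring σ) (c : C)
    (p : B) (w : B ⊗[k] B) :
    (LinearMap.mul' k B).rTensor B ((TensorProduct.assoc k B B B).symm
        (Phi3 σ ((comul (R := k) (A := C)).lTensor C (comul (R := k) c)) (p ⊗ₜ[k] w))) =
      Phi2 σ (comul (R := k) c) ((LinearMap.mul' k B).rTensor B
        ((TensorProduct.assoc k B B B).symm (p ⊗ₜ[k] w))) := by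
  induction w using TensorProduct.induction_on with
  | zero => simp [TensorProduct.tmul_zero]
  | tmul u v =>
    rw [← Coalgebra.coassoc_apply, ← TensorProduct.assoc_tmul p u v, Phi3_assoc,
      LinearEquiv.symm_apply_apply, LinearEquiv.symm_apply_apply,
      LinearMap.rTensor_tmul, LinearMap.mul'_apply, Phi2_mul_fst hσ]
  | add w₁ w₂ h₁ h₂ =>
    simp only [TensorProduct.tmul_add, map_add, LinearMap.map_add, h₁, h₂]

lemma key_snd {σ : C →ₗ[k] B →ₗ[k] B} (hσ : IsMeasuring σ)
    (Ψ' : B ⊗[k] B →ₗ[k] B ⊗[k] B) (c : C) (t : B)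
    (ht : ∀ (c' : C) (q : B), Ψ' (Phi2 σ (comul (R := k) c') (q ⊗ₜ[k] t)) =
      Phi2 σ (comul (R := k) c') (Ψ' (q ⊗ₜ[k] t)))
    (s : B ⊗[k] B) :
    (LinearMap.mul' k B).rTensor B ((TensorProduct.assoc k B B B).symm
        (Ψ'.lTensor B (TensorProduct.assoc k B B B
          (Phi3' σ ((comul (R := k) (A := C)).rTensor C (comul (R := k) c)) (s ⊗ₜ[k] t))))) =
      Phi2 σ (comul (R := k) c) ((LinearMap.mul' k B).rTensor B
        ((TensorProduct.assoc k B B B).symm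
          (Ψ'.lTensor B (TensorProduct.assoc k B B B (s ⊗ₜ[k] t))))) := by
  induction s using TensorProduct.induction_on with
  | zero => simp [TensorProduct.zero_tmul]
  | tmul p q =>
    rw [← Phi3_assoc, Coalgebra.coassoc_apply, TensorProduct.assoc_tmul,
      lTensor_Phi3_comm σ Ψ' (q ⊗ₜ[k] t) (fun c' => ht c' q) c p,
      LinearMap.lTensor_tmul, Phi3_mul_collapse hσ]
  | add s₁ s₂ h₁ h₂ =>
    simp only [TensorProduct.add_tmul, map_add, LinearMap.map_add, h₁, h₂]

lemma key_fst {σ : C →ₗ[k] B →ₗ[k] B} (hσ : IsMeasuring σ)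
    {V' : Type u} [AddCommGroup V'] [Module k V'] (j : V' →ₗ[k] B)
    (Ψ' : B ⊗[k] B →ₗ[k] B ⊗[k] B) (c : C) (a : B)
    (ha : ∀ (c' : C) (v : V'), Ψ' (Phi2 σ (comul (R := k) c') (a ⊗ₜ[k] j v)) =
      Phi2 σ (comul (R := k) c') (Ψ' (a ⊗ₜ[k] j v)))
    (q : V' ⊗[k] B) :
    (LinearMap.mul' k B).lTensor B (TensorProduct.assoc k B B B
        (Ψ'.rTensor B ((TensorProduct.assoc k B B B).symm
          (Phi3 σ ((comul (R := k) (A := C)).lTensor C (comul (R := k) c))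
            (a ⊗ₜ[k] j.rTensor B q))))) =
      Phi2 σ (comul (R := k) c) ((LinearMap.mul' k B).lTensor B (TensorProduct.assoc k B B B
        (Ψ'.rTensor B ((TensorProduct.assoc k B B B).symm (a ⊗ₜ[k] j.rTensor B q))))) := by
  induction q using TensorProduct.induction_on with
  | zero => simp [TensorProduct.tmul_zero]
  | tmul v t =>
    rw [LinearMap.rTensor_tmul, ← Coalgebra.coassoc_apply,
      ← TensorProduct.assoc_tmul a (j v) t, Phi3_assoc,
      LinearEquiv.symm_apply_apply, LinearEquiv.symm_apply_apply,
      rTensor_Phi3'_comm σ Ψ' (a ⊗ₜ[k] j v) (fun c' => ha c' v) c t,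
      LinearMap.rTensor_tmul, Phi3'_mul_collapse hσ]
  | add q₁ q₂ h₁ h₂ =>
    simp only [TensorProduct.tmul_add, map_add, LinearMap.map_add, h₁, h₂]

end AuxMeasuring

set_option synthInstance.maxHeartbeats 1000000 in
set_option maxHeartbeats 4000000 in
/-- If a measuring `σ : C → End(T(V))` preserves `V` and commutes with the
braiding on `V ⊗ V`, then it commutes with the induced braiding `Ψ` on all of `T(V) ⊗ T(V)`. -/
theorem measuring_preserves_braiding_on_tensorAlgebra
    (V : Type u) [AddCommGroup V] [Module k V]
    (R : V ⊗[k] V →ₗ[k] V ⊗[k] V) (hR : Function.Bijective R)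
    (hbraid : SatisfiesBraidEquation R)
    (Ψ : (TensorAlgebra k V ⊗[k] TensorAlgebra k V) →ₗ[k]
        (TensorAlgebra k V ⊗[k] TensorAlgebra k V))
    (hΨbij : Function.Bijective Ψ)
    (hΨι : Ψ ∘ₗ TensorProduct.map (TensorAlgebra.ι k) (TensorAlgebra.ι k) =
      TensorProduct.map (TensorAlgebra.ι k) (TensorAlgebra.ι k) ∘ₗ R)
    (hΨbraid : SatisfiesBraidEquation Ψ)
    (hΨm₁ : Ψ ∘ₗ (LinearMap.mul' k (TensorAlgebra k V)).rTensor (TensorAlgebra k V) ∘ₗ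
        (TensorProduct.assoc k _ _ _).symm.toLinearMap =
      (LinearMap.mul' k (TensorAlgebra k V)).lTensor (TensorAlgebra k V) ∘ₗ
        braidLeft Ψ ∘ₗ braidRight Ψ)
    (hΨm₂ : Ψ ∘ₗ (LinearMap.mul' k (TensorAlgebra k V)).lTensor (TensorAlgebra k V) =
      (LinearMap.mul' k (TensorAlgebra k V)).rTensor (TensorAlgebra k V) ∘ₗ
        (TensorProduct.assoc k _ _ _).symm.toLinearMap ∘ₗ
        braidRight Ψ ∘ₗ braidLeft Ψ)
    (hΨ₁ : ∀ x : TensorAlgebra k V, Ψ (x ⊗ₜ[k] 1) = 1 ⊗ₜ[k] x)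
    (hΨ₂ : ∀ x : TensorAlgebra k V, Ψ (1 ⊗ₜ[k] x) = x ⊗ₜ[k] 1)
    (C : Type u) [AddCommGroup C] [Module k C] [Coalgebra k C]
    (σ : C →ₗ[k] TensorAlgebra k V →ₗ[k] TensorAlgebra k V)
    (hσ : IsMeasuring σ)
    (hσV : ∀ (c : C) (v : V), ∃ w : V, σ c (TensorAlgebra.ι k v) = TensorAlgebra.ι k w)
    (hcomm : ∀ (c : C) (v w : V),
      Ψ (twoAction σ c (TensorAlgebra.ι k v ⊗ₜ[k] TensorAlgebra.ι k w)) =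
        twoAction σ c (Ψ (TensorAlgebra.ι k v ⊗ₜ[k] TensorAlgebra.ι k w))) :
    ∀ (c : C) (x y : TensorAlgebra k V),
      Ψ (twoAction σ c (x ⊗ₜ[k] y)) = twoAction σ c (Ψ (x ⊗ₜ[k] y)) := by
  classical
  have hm1 : ∀ E : TensorAlgebra k V ⊗[k] (TensorAlgebra k V ⊗[k] TensorAlgebra k V),
      Ψ ((LinearMap.mul' k (TensorAlgebra k V)).rTensor (TensorAlgebra k V)
          ((TensorProduct.assoc k (TensorAlgebra k V) (TensorAlgebra k V)
            (TensorAlgebra k V)).symm E)) =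
        (LinearMap.mul' k (TensorAlgebra k V)).lTensor (TensorAlgebra k V)
          (braidLeft Ψ (braidRight Ψ E)) := fun E => by
    simpa only [LinearMap.comp_apply, LinearEquiv.coe_coe] using LinearMap.congr_fun hΨm₁ E
  have hm2 : ∀ E : TensorAlgebra k V ⊗[k] (TensorAlgebra k V ⊗[k] TensorAlgebra k V),
      Ψ ((LinearMap.mul' k (TensorAlgebra k V)).lTensor (TensorAlgebra k V) E) =
        (LinearMap.mul' k (TensorAlgebra k V)).rTensor (TensorAlgebra k V)
          ((TensorProduct.assoc k (TensorAlgebra k V) (TensorAlgebra k V)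
            (TensorAlgebra k V)).symm (braidRight Ψ (braidLeft Ψ E))) := fun E => by
    simpa only [LinearMap.comp_apply, LinearEquiv.coe_coe] using LinearMap.congr_fun hΨm₂ E
  have hbl : ∀ X, braidLeft (k := k) Ψ X =
      TensorProduct.assoc k (TensorAlgebra k V) (TensorAlgebra k V) (TensorAlgebra k V)
        (Ψ.rTensor (TensorAlgebra k V)
          ((TensorProduct.assoc k (TensorAlgebra k V) (TensorAlgebra k V)
            (TensorAlgebra k V)).symm X)) := fun X => rfl
  have hbr : ∀ X, braidRight (k := k) Ψ X = Ψ.lTensor (TensorAlgebra k V) X := fun X => rfl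
  -- `Ψ` maps `T(V) ⊗ ι(V)` into the image of `V ⊗ T(V)`.
  have hrange : ∀ (x : TensorAlgebra k V) (w : V),
      Ψ (x ⊗ₜ[k] TensorAlgebra.ι k w) ∈
        LinearMap.range ((TensorAlgebra.ι k (M := V)).rTensor (TensorAlgebra k V)) := by
    intro x
    refine TensorAlgebra.induction
      (C := fun x => ∀ w : V, Ψ (x ⊗ₜ[k] TensorAlgebra.ι k w) ∈
        LinearMap.range ((TensorAlgebra.ι k (M := V)).rTensor (TensorAlgebra k V)))
      ?_ ?_ ?_ ?_ x
    · intro r w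
      rw [Algebra.algebraMap_eq_smul_one, ← TensorProduct.smul_tmul', map_smul]
      refine Submodule.smul_mem _ r ⟨w ⊗ₜ[k] 1, ?_⟩
      rw [LinearMap.rTensor_tmul, hΨ₂]
    · intro v w
      have h := LinearMap.congr_fun hΨι (v ⊗ₜ[k] w)
      simp only [LinearMap.comp_apply, TensorProduct.map_tmul] at h
      rw [h, ← LinearMap.rTensor_comp_lTensor]
      exact ⟨(TensorAlgebra.ι k).lTensor V (R (v ⊗ₜ[k] w)), rfl⟩
    · intro a b iha ihb w
      have inner : ∀ (qa : V ⊗[k] TensorAlgebra k V) (t : TensorAlgebra k V),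
          (LinearMap.mul' k (TensorAlgebra k V)).lTensor (TensorAlgebra k V)
            (TensorProduct.assoc k (TensorAlgebra k V) (TensorAlgebra k V) (TensorAlgebra k V)
              (((TensorAlgebra.ι k (M := V)).rTensor (TensorAlgebra k V) qa) ⊗ₜ[k] t)) ∈
          LinearMap.range ((TensorAlgebra.ι k (M := V)).rTensor (TensorAlgebra k V)) := by
        intro qa t
        induction qa using TensorProduct.induction_on with
        | zero => simp
        | tmul u s =>
          rw [LinearMap.rTensor_tmul, TensorProduct.assoc_tmul, LinearMap.lTensor_tmul,
            LinearMap.mul'_apply]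
          exact ⟨u ⊗ₜ[k] (s * t), by rw [LinearMap.rTensor_tmul]⟩
        | add q₁ q₂ h₁ h₂ =>
          rw [map_add, TensorProduct.add_tmul, map_add, map_add]
          exact Submodule.add_mem _ h₁ h₂
      have key : ∀ q : V ⊗[k] TensorAlgebra k V,
          (LinearMap.mul' k (TensorAlgebra k V)).lTensor (TensorAlgebra k V)
            (braidLeft Ψ (a ⊗ₜ[k]
              ((TensorAlgebra.ι k (M := V)).rTensor (TensorAlgebra k V) q))) ∈
          LinearMap.range ((TensorAlgebra.ι k (M := V)).rTensor (TensorAlgebra k V)) := by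
        intro q
        induction q using TensorProduct.induction_on with
        | zero => simp
        | tmul v t =>
          obtain ⟨qa, hqa⟩ := iha v
          rw [LinearMap.rTensor_tmul, hbl, TensorProduct.assoc_symm_tmul,
            LinearMap.rTensor_tmul, ← hqa]
          exact inner qa t
        | add q₁ q₂ h₁ h₂ =>
          rw [map_add, TensorProduct.tmul_add, map_add, map_add]
          exact Submodule.add_mem _ h₁ h₂
      have h1 : (a * b) ⊗ₜ[k] TensorAlgebra.ι k w =
          (LinearMap.mul' k (TensorAlgebra k V)).rTensor (TensorAlgebra k V)
            ((TensorProduct.assoc k (TensorAlgebra k V) (TensorAlgebra k V)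
              (TensorAlgebra k V)).symm
              (a ⊗ₜ[k] (b ⊗ₜ[k] TensorAlgebra.ι k w))) := by
        rw [TensorProduct.assoc_symm_tmul, LinearMap.rTensor_tmul, LinearMap.mul'_apply]
      obtain ⟨qb, hqb⟩ := ihb w
      rw [h1, hm1, hbr, LinearMap.lTensor_tmul, ← hqb]
      exact key qb
    · intro a b iha ihb w
      rw [TensorProduct.add_tmul, map_add]
      exact Submodule.add_mem _ (iha w) (ihb w)
  -- the commutation statement when the second argument is a generator
  have hbase : ∀ (x : TensorAlgebra k V) (c : C) (w : V),
      Ψ (Phi2 σ (Coalgebra.comul (R := k) c) (x ⊗ₜ[k] TensorAlgebra.ι k w)) =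
        Phi2 σ (Coalgebra.comul (R := k) c) (Ψ (x ⊗ₜ[k] TensorAlgebra.ι k w)) := by
    intro x
    refine TensorAlgebra.induction
      (C := fun x => ∀ (c : C) (w : V),
        Ψ (Phi2 σ (Coalgebra.comul (R := k) c) (x ⊗ₜ[k] TensorAlgebra.ι k w)) =
          Phi2 σ (Coalgebra.comul (R := k) c) (Ψ (x ⊗ₜ[k] TensorAlgebra.ι k w)))
      ?_ ?_ ?_ ?_ x
    · intro r c w
      rw [Algebra.algebraMap_eq_smul_one, ← TensorProduct.smul_tmul']
      simp only [map_smul]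
      rw [Phi2_one_left hσ, hΨ₂, hΨ₂, Phi2_one_right hσ]
    · intro v c w
      exact hcomm c v w
    · intro a b iha ihb c w
      obtain ⟨qb, hqb⟩ := hrange b w
      have h1 : ∀ y : TensorAlgebra k V, (a * b) ⊗ₜ[k] y =
          (LinearMap.mul' k (TensorAlgebra k V)).rTensor (TensorAlgebra k V)
            ((TensorProduct.assoc k (TensorAlgebra k V) (TensorAlgebra k V)
              (TensorAlgebra k V)).symm (a ⊗ₜ[k] (b ⊗ₜ[k] y))) := by
        intro y
        rw [TensorProduct.assoc_symm_tmul, LinearMap.rTensor_tmul, LinearMap.mul'_apply]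
      have hL : Phi2 σ (Coalgebra.comul (R := k) c) ((a * b) ⊗ₜ[k] TensorAlgebra.ι k w) =
          (LinearMap.mul' k (TensorAlgebra k V)).rTensor (TensorAlgebra k V)
            ((TensorProduct.assoc k (TensorAlgebra k V) (TensorAlgebra k V)
              (TensorAlgebra k V)).symm
              (Phi3 σ ((Coalgebra.comul (R := k) (A := C)).lTensor C
                  (Coalgebra.comul (R := k) c))
                (a ⊗ₜ[k] (b ⊗ₜ[k] TensorAlgebra.ι k w)))) := by
        rw [← Coalgebra.coassoc_apply, ← TensorProduct.assoc_tmul a b (TensorAlgebra.ι k w),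
          Phi3_assoc, LinearEquiv.symm_apply_apply, Phi2_mul_fst hσ]
      rw [hL, hm1, hbr,
        lTensor_Phi3_comm σ Ψ (b ⊗ₜ[k] TensorAlgebra.ι k w) (fun c' => ihb c' w) c a,
        h1 (TensorAlgebra.ι k w), hm1, hbr, LinearMap.lTensor_tmul, ← hqb,
        hbl (Phi3 σ ((Coalgebra.comul (R := k) (A := C)).lTensor C (Coalgebra.comul (R := k) c))
          (a ⊗ₜ[k] (TensorAlgebra.ι k (M := V)).rTensor (TensorAlgebra k V) qb)),
        hbl (a ⊗ₜ[k] (TensorAlgebra.ι k (M := V)).rTensor (TensorAlgebra k V) qb)]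
      exact key_fst hσ (TensorAlgebra.ι k) Ψ c a (fun c' v => iha c' v) qb
    · intro a b iha ihb c w
      simp only [TensorProduct.add_tmul, map_add]
      rw [iha c w, ihb c w]
  -- main induction on the second tensor factor
  suffices H : ∀ (y : TensorAlgebra k V) (c : C) (x : TensorAlgebra k V),
      Ψ (Phi2 σ (Coalgebra.comul (R := k) c) (x ⊗ₜ[k] y)) =
        Phi2 σ (Coalgebra.comul (R := k) c) (Ψ (x ⊗ₜ[k] y)) by
    intro c x y
    exact H y c x
  intro y
  refine TensorAlgebra.induction
    (C := fun y => ∀ (c : C) (x : TensorAlgebra k V),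
      Ψ (Phi2 σ (Coalgebra.comul (R := k) c) (x ⊗ₜ[k] y)) =
        Phi2 σ (Coalgebra.comul (R := k) c) (Ψ (x ⊗ₜ[k] y)))
    ?_ ?_ ?_ ?_ y
  · intro r c x
    rw [Algebra.algebraMap_eq_smul_one, TensorProduct.tmul_smul]
    simp only [map_smul]
    rw [Phi2_one_right hσ, hΨ₁, hΨ₁, Phi2_one_left hσ]
  · intro w c x
    exact hbase x c w
  · intro y₁ y₂ ih₁ ih₂ c x
    have h2 : ∀ u : TensorAlgebra k V, u ⊗ₜ[k] (y₁ * y₂) =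
        (LinearMap.mul' k (TensorAlgebra k V)).lTensor (TensorAlgebra k V)
          (u ⊗ₜ[k] (y₁ ⊗ₜ[k] y₂)) := by
      intro u
      rw [LinearMap.lTensor_tmul, LinearMap.mul'_apply]
    have hE : (TensorProduct.assoc k (TensorAlgebra k V) (TensorAlgebra k V)
          (TensorAlgebra k V)).symm
          (Phi3 σ ((Coalgebra.comul (R := k) (A := C)).lTensor C (Coalgebra.comul (R := k) c))
            (x ⊗ₜ[k] (y₁ ⊗ₜ[k] y₂))) =
        Phi3' σ ((Coalgebra.comul (R := k) (A := C)).rTensor C (Coalgebra.comul (R := k) c))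
          ((x ⊗ₜ[k] y₁) ⊗ₜ[k] y₂) := by
      rw [← Coalgebra.coassoc_apply, ← TensorProduct.assoc_tmul x y₁ y₂, Phi3_assoc,
        LinearEquiv.symm_apply_apply]
    rw [Phi2_mul_snd hσ, hm2, h2 x, hm2,
      hbl (Phi3 σ ((Coalgebra.comul (R := k) (A := C)).lTensor C (Coalgebra.comul (R := k) c))
        (x ⊗ₜ[k] (y₁ ⊗ₜ[k] y₂))),
      hE, rTensor_Phi3'_comm σ Ψ (x ⊗ₜ[k] y₁) (fun c' => ih₁ c' x) c y₂,
      hbl (x ⊗ₜ[k] (y₁ ⊗ₜ[k] y₂)), TensorProduct.assoc_symm_tmul, LinearMap.rTensor_tmul,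
      hbr, hbr]
    exact key_snd hσ Ψ c y₂ (fun c' q => ih₂ c' q) (Ψ (x ⊗ₜ[k] y₁))
  · intro a b iha ihb c x
    simp only [TensorProduct.tmul_add, map_add]
    rw [iha c x, ihb c x]
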